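/- (Union lemma: joint local correctability of two regions with disjoint recovery supports.) Let H = H_{A₁} ⊗ H_{B₁} ⊗ H_{A₂} ⊗ H_{B₂} ⊗ H_E and H_R be finite-dimensional Hilbert spaces, and let S be a set of density matrices on H ⊗ H_R. Suppose there are quantum channels 𝓡₁ : B(H_{B₁}) → B(H_{A₁} ⊗ H_{B₁}) and 𝓡₂ : B(H_{B₂}) → B(H_{A₂} ⊗ H_{B₂}) and ε₁, ε₂ ≥ 0 such that for every ρ ∈ S: ‖(𝓡₁ ⊗ id)(tr_{A₁} ρ) − ρ‖₁ ≤ ε₁ and ‖(𝓡₂ ⊗ id)(tr_{A₂} ρ) − ρ‖₁ ≤ ε₂ (the identity factors acting on all remaining tensor factors). Then for every ρ ∈ S: ‖((𝓡₁ ⊗ 𝓡₂) ⊗ id)(tr_{A₁A₂} ρ) − ρ‖₁ ≤ ε₁ + ε₂. -/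

import Mathlib

/-!
Write `Ψᵢ σ = (𝓡ᵢ ⊗ id)(tr_{Aᵢ} σ)`. Since `𝓡₁` and `𝓡₂` act on disjoint factors, the joint
recovery is `Ψ₂ ∘ Ψ₁`, so `Ψ₂ Ψ₁ ρ - ρ = Ψ₂ (Ψ₁ ρ - ρ) + (Ψ₂ ρ - ρ)`. Both remaining facts, the
triangle inequality for `‖·‖₁` on Hermitian matrices and `‖Ψ₂ X‖₁ ≤ ‖X‖₁` for the channel `Ψ₂`,
come from `‖P - N‖₁ ≤ tr P + tr N` for `P, N ≥ 0` (pair `P - N` with its sign), applied to the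
splitting `X = X⁺ - X⁻`, for which `‖X‖₁ = tr X⁺ + tr X⁻` and `tr Ψ₂ X^± = tr X^±`.
-/

open scoped Kronecker ComplexOrder Matrix Classical

/-- The operator norm of a matrix, i.e. the norm of the induced linear map on Euclidean space. -/
noncomputable def opNorm {n : Type} [Fintype n] [DecidableEq n] (A : Matrix n n ℂ) : ℝ :=
  ‖Matrix.toEuclideanCLM (𝕜 := ℂ) A‖

/-- The positive-semidefinite square root (junk value `0` off the PSD cone). -/
noncomputable def psdSqrt {n : Type} [Fintype n] [DecidableEq n] (A : Matrix n n ℂ) :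
    Matrix n n ℂ :=
  if h : A.PosSemidef then
    (h.1.eigenvectorUnitary : Matrix n n ℂ) *
      Matrix.diagonal (fun i => ((Real.sqrt (h.1.eigenvalues i) : ℝ) : ℂ)) *
      (star (h.1.eigenvectorUnitary : Matrix n n ℂ))
  else 0

/-- The trace norm `‖A‖₁ = tr √(AᴴA)`. -/
noncomputable def traceNorm {n : Type} [Fintype n] [DecidableEq n] (A : Matrix n n ℂ) : ℝ :=
  ((psdSqrt (Aᴴ * A)).trace).re

/-- Fidelity `F(ρ,σ) = tr √(√ρ σ √ρ)`. -/
noncomputable def fidelity {n : Type} [Fintype n] [DecidableEq n] (ρ σ : Matrix n n ℂ) : ℝ :=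
  ((psdSqrt (psdSqrt ρ * σ * psdSqrt ρ)).trace).re

/-- Bures distance `𝔅(ρ,σ) = √(2(1 − F(ρ,σ)))`. -/
noncomputable def bures {n : Type} [Fintype n] [DecidableEq n] (ρ σ : Matrix n n ℂ) : ℝ :=
  Real.sqrt (2 * (1 - fidelity ρ σ))

/-- The rank-one projector `|ψ⟩⟨ψ|`. -/
def outer {n : Type} [Fintype n] (ψ : n → ℂ) : Matrix n n ℂ :=
  Matrix.of fun i j => ψ i * (starRingEnd ℂ) (ψ j)

/-- Complete positivity of a linear map between matrix algebras: for every `k`, the map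
`id_{M_k} ⊗ Φ` (acting blockwise) preserves positive semidefiniteness. -/
def IsCompletelyPositive {n m : Type} [Fintype n] [DecidableEq n] [Fintype m] [DecidableEq m]
    (Φ : Matrix n n ℂ →ₗ[ℂ] Matrix m m ℂ) : Prop :=
  ∀ (k : ℕ) (M : Matrix (Fin k × n) (Fin k × n) ℂ), M.PosSemidef →
    (Matrix.of fun (p q : Fin k × m) =>
      (Φ (Matrix.of fun a b => M (p.1, a) (q.1, b))) p.2 q.2).PosSemidef

section TraceNorm

open Matrix
open scoped MatrixOrder

variable {n m ι : Type} [Fintype n] [Fintype ι]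

lemma Matrix.IsHermitian.sum_mul_mul_conjTranspose (E : ι → Matrix m n ℂ) {X : Matrix n n ℂ}
    (hX : X.IsHermitian) : (∑ i, E i * X * (E i)ᴴ).IsHermitian :=
  isSelfAdjoint_sum _ fun i _ => isHermitian_mul_mul_conjTranspose (E i) hX

variable [Fintype m]

lemma Matrix.PosSemidef.sum_mul_mul_conjTranspose (E : ι → Matrix m n ℂ) {X : Matrix n n ℂ}
    (hX : X.PosSemidef) : (∑ i, E i * X * (E i)ᴴ).PosSemidef :=
  posSemidef_sum _ fun i _ => hX.mul_mul_conjTranspose_same (E i)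

variable [DecidableEq n]

lemma psdSqrt_eq_cfcSqrt {A : Matrix n n ℂ} (hA : A.PosSemidef) : psdSqrt A = CFC.sqrt A := by
  rw [CFC.sqrt_eq_real_sqrt A hA.nonneg, cfcₙ_eq_cfc, hA.1.cfc_eq, psdSqrt, dif_pos hA]
  simp [IsHermitian.cfc, Function.comp_def]

lemma traceNorm_eq_re_trace_cfcAbs (A : Matrix n n ℂ) : traceNorm A = (CFC.abs A).trace.re := by
  rw [traceNorm, psdSqrt_eq_cfcSqrt (posSemidef_conjTranspose_mul_self A)]
  rfl

lemma Matrix.IsHermitian.traceNorm_eq {X : Matrix n n ℂ} (hX : X.IsHermitian) :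
    traceNorm X = (X⁺).trace.re + (X⁻).trace.re := by
  rw [traceNorm_eq_re_trace_cfcAbs, ← CFC.posPart_add_negPart X hX.isSelfAdjoint, trace_add,
    Complex.add_re]

lemma re_trace_mul_nonneg {A B : Matrix n n ℂ} (hA : A.PosSemidef) (hB : B.PosSemidef) :
    0 ≤ (A * B).trace.re := by
  obtain ⟨C, rfl⟩ := CStarAlgebra.nonneg_iff_eq_star_mul_self.mp hA.nonneg
  rw [mul_assoc, trace_mul_comm, star_eq_conjTranspose]
  exact (RCLike.nonneg_iff.mp (hB.mul_mul_conjTranspose_same C).trace_nonneg).1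

lemma re_trace_mul_le_of_le_one {S P : Matrix n n ℂ} (hS : S ≤ 1) (hP : P.PosSemidef) :
    (S * P).trace.re ≤ P.trace.re := by
  have := re_trace_mul_nonneg (le_iff.mp hS) hP
  rwa [sub_mul, one_mul, trace_sub, Complex.sub_re, sub_nonneg] at this

lemma traceNorm_sub_le {P N : Matrix n n ℂ} (hP : P.PosSemidef) (hN : N.PosSemidef) :
    traceNorm (P - N) ≤ P.trace.re + N.trace.re := by
  set X := P - N
  have hX : IsSelfAdjoint X := (hP.1.sub hN.1).isSelfAdjoint
  set S := cfc (fun x : ℝ => if 0 ≤ x then (1 : ℝ) else -1) X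
  have hSX : S * X = CFC.abs X := by
    rw [CFC.abs_eq_cfc_norm X hX]
    conv_lhs => arg 2; rw [← cfc_id' ℝ X]
    rw [← cfc_mul _ _ X (finite_real_spectrum.continuousOn _)]
    refine cfc_congr fun x _ => ?_
    split_ifs with hx
    · simp [Real.norm_eq_abs, abs_of_nonneg hx]
    · simp [Real.norm_eq_abs, abs_of_neg (not_le.mp hx)]
  have hS : S ≤ 1 := cfc_le_one _ X fun x _ => by split_ifs <;> norm_num
  have hS' : -S ≤ 1 := by
    rw [← cfc_neg]
    exact cfc_le_one _ X fun x _ => by split_ifs <;> norm_num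
  have hSP := re_trace_mul_le_of_le_one hS hP
  have hSN := re_trace_mul_le_of_le_one hS' hN
  rw [neg_mul, trace_neg, Complex.neg_re] at hSN
  rw [traceNorm_eq_re_trace_cfcAbs, ← hSX, mul_sub, trace_sub, Complex.sub_re]
  linarith

lemma traceNorm_add_le {X Y : Matrix n n ℂ} (hX : X.IsHermitian) (hY : Y.IsHermitian) :
    traceNorm (X + Y) ≤ traceNorm X + traceNorm Y := by
  calc traceNorm (X + Y) = traceNorm ((X⁺ + Y⁺) - (X⁻ + Y⁻)) := by
        rw [add_sub_add_comm, CFC.posPart_sub_negPart X hX.isSelfAdjoint,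
          CFC.posPart_sub_negPart Y hY.isSelfAdjoint]
    _ ≤ (X⁺ + Y⁺).trace.re + (X⁻ + Y⁻).trace.re :=
        traceNorm_sub_le ((CFC.posPart_nonneg X).posSemidef.add (CFC.posPart_nonneg Y).posSemidef)
          ((CFC.negPart_nonneg X).posSemidef.add (CFC.negPart_nonneg Y).posSemidef)
    _ = traceNorm X + traceNorm Y := by
        rw [hX.traceNorm_eq, hY.traceNorm_eq, trace_add, trace_add, Complex.add_re, Complex.add_re]
        ring

lemma trace_sum_mul_mul_conjTranspose {E : ι → Matrix m n ℂ} (hE : ∑ i, (E i)ᴴ * E i = 1)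
    (X : Matrix n n ℂ) : (∑ i, E i * X * (E i)ᴴ).trace = X.trace := by
  simp only [trace_sum, trace_mul_cycle (E _) X]
  rw [← trace_sum, ← Finset.sum_mul, hE, one_mul]

lemma traceNorm_sum_mul_mul_conjTranspose_le [DecidableEq m] {E : ι → Matrix m n ℂ}
    (hE : ∑ i, (E i)ᴴ * E i = 1) {X : Matrix n n ℂ} (hX : X.IsHermitian) :
    traceNorm (∑ i, E i * X * (E i)ᴴ) ≤ traceNorm X := by
  have hsplit : ∑ i, E i * X * (E i)ᴴ = ∑ i, E i * X⁺ * (E i)ᴴ - ∑ i, E i * X⁻ * (E i)ᴴ := by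
    conv_lhs => rw [← CFC.posPart_sub_negPart X hX.isSelfAdjoint]
    simp only [Matrix.mul_sub, Matrix.sub_mul, Finset.sum_sub_distrib]
  rw [hsplit, hX.traceNorm_eq, ← trace_sum_mul_mul_conjTranspose hE X⁺,
    ← trace_sum_mul_mul_conjTranspose hE X⁻]
  exact traceNorm_sub_le ((CFC.posPart_nonneg X).posSemidef.sum_mul_mul_conjTranspose E)
    ((CFC.negPart_nonneg X).posSemidef.sum_mul_mul_conjTranspose E)

end TraceNorm

section UnionLemma

variable {A1 B1 A2 B2 Ei Ri : Type} [Fintype A1] [DecidableEq A1] [Fintype B1] [DecidableEq B1]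
  [Fintype A2] [DecidableEq A2] [Fintype B2] [DecidableEq B2] [Fintype Ei] [DecidableEq Ei]
  [Fintype Ri] [DecidableEq Ri]

-- The total Hilbert space is `H ⊗ H_R` with
-- `H = H_{A₁} ⊗ H_{B₁} ⊗ H_{A₂} ⊗ H_{B₂} ⊗ H_E`, indexed by
-- `Q = A1 × (B1 × (A2 × (B2 × (Ei × Ri))))`.

/-- `tr_{A₁} ρ`. -/
noncomputable def ptrA1 (ρ : Matrix (A1 × (B1 × (A2 × (B2 × (Ei × Ri)))))
      (A1 × (B1 × (A2 × (B2 × (Ei × Ri))))) ℂ) :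
    Matrix (B1 × (A2 × (B2 × (Ei × Ri)))) (B1 × (A2 × (B2 × (Ei × Ri)))) ℂ :=
  Matrix.of fun p q => ∑ a : A1, ρ (a, p) (a, q)

/-- `tr_{A₂} ρ`. -/
noncomputable def ptrA2 (ρ : Matrix (A1 × (B1 × (A2 × (B2 × (Ei × Ri)))))
      (A1 × (B1 × (A2 × (B2 × (Ei × Ri))))) ℂ) :
    Matrix (A1 × (B1 × (B2 × (Ei × Ri)))) (A1 × (B1 × (B2 × (Ei × Ri)))) ℂ :=
  Matrix.of fun p q => ∑ a : A2,
    ρ (p.1, (p.2.1, (a, p.2.2))) (q.1, (q.2.1, (a, q.2.2)))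

/-- `tr_{A₁A₂} ρ`. -/
noncomputable def ptrA1A2 (ρ : Matrix (A1 × (B1 × (A2 × (B2 × (Ei × Ri)))))
      (A1 × (B1 × (A2 × (B2 × (Ei × Ri))))) ℂ) :
    Matrix (B1 × (B2 × (Ei × Ri))) (B1 × (B2 × (Ei × Ri))) ℂ :=
  Matrix.of fun p q => ∑ a1 : A1, ∑ a2 : A2,
    ρ (a1, (p.1, (a2, p.2))) (a1, (q.1, (a2, q.2)))

/-- `(𝓡₁ ⊗ id)(M)`, where `𝓡₁ : B(H_{B₁}) → B(H_{A₁} ⊗ H_{B₁})` has Kraus operators `F k`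
and the identity acts on all remaining tensor factors. -/
noncomputable def applyRec1 {n : ℕ} (F : Fin n → Matrix (A1 × B1) B1 ℂ)
    (M : Matrix (B1 × (A2 × (B2 × (Ei × Ri)))) (B1 × (A2 × (B2 × (Ei × Ri)))) ℂ) :
    Matrix (A1 × (B1 × (A2 × (B2 × (Ei × Ri)))))
      (A1 × (B1 × (A2 × (B2 × (Ei × Ri))))) ℂ :=
  Matrix.of fun p q => ∑ k, ∑ b : B1, ∑ b' : B1,
    F k (p.1, p.2.1) b * M (b, p.2.2) (b', q.2.2) * (starRingEnd ℂ) (F k (q.1, q.2.1) b')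

/-- `(𝓡₂ ⊗ id)(M)`, where `𝓡₂ : B(H_{B₂}) → B(H_{A₂} ⊗ H_{B₂})` has Kraus operators `G k`. -/
noncomputable def applyRec2 {n : ℕ} (G : Fin n → Matrix (A2 × B2) B2 ℂ)
    (M : Matrix (A1 × (B1 × (B2 × (Ei × Ri)))) (A1 × (B1 × (B2 × (Ei × Ri)))) ℂ) :
    Matrix (A1 × (B1 × (A2 × (B2 × (Ei × Ri)))))
      (A1 × (B1 × (A2 × (B2 × (Ei × Ri))))) ℂ :=
  Matrix.of fun p q => ∑ k, ∑ b : B2, ∑ b' : B2,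
    G k (p.2.2.1, p.2.2.2.1) b *
      M (p.1, (p.2.1, (b, p.2.2.2.2))) (q.1, (q.2.1, (b', q.2.2.2.2))) *
      (starRingEnd ℂ) (G k (q.2.2.1, q.2.2.2.1) b')

/-- `((𝓡₁ ⊗ 𝓡₂) ⊗ id)(M)`. -/
noncomputable def applyRec12 {n1 n2 : ℕ} (F : Fin n1 → Matrix (A1 × B1) B1 ℂ)
    (G : Fin n2 → Matrix (A2 × B2) B2 ℂ)
    (M : Matrix (B1 × (B2 × (Ei × Ri))) (B1 × (B2 × (Ei × Ri))) ℂ) :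
    Matrix (A1 × (B1 × (A2 × (B2 × (Ei × Ri)))))
      (A1 × (B1 × (A2 × (B2 × (Ei × Ri))))) ℂ :=
  Matrix.of fun p q => ∑ k1, ∑ k2, ∑ b1 : B1, ∑ b1' : B1, ∑ b2 : B2, ∑ b2' : B2,
    F k1 (p.1, p.2.1) b1 * G k2 (p.2.2.1, p.2.2.2.1) b2 *
      M (b1, (b2, p.2.2.2.2)) (b1', (b2', q.2.2.2.2)) *
      (starRingEnd ℂ) (G k2 (q.2.2.1, q.2.2.2.1) b2') *
      (starRingEnd ℂ) (F k1 (q.1, q.2.1) b1')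

end UnionLemma

section Recovery

open Matrix

variable {A1 B1 A2 B2 Ei Ri : Type}

local notation "Q" => A1 × (B1 × (A2 × (B2 × (Ei × Ri))))

lemma isHermitian_ptrA1 [Fintype A1] {ρ : Matrix Q Q ℂ} (hρ : ρ.IsHermitian) :
    (ptrA1 ρ).IsHermitian := by
  ext p q
  simp only [conjTranspose_apply, ptrA1, of_apply, star_sum, hρ.apply]

lemma isHermitian_applyRec1 [Fintype B1] {n1 : ℕ} (F : Fin n1 → Matrix (A1 × B1) B1 ℂ)
    {M : Matrix (B1 × (A2 × (B2 × (Ei × Ri)))) (B1 × (A2 × (B2 × (Ei × Ri)))) ℂ}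
    (hM : M.IsHermitian) : (applyRec1 F M).IsHermitian := by
  ext p q
  simp only [conjTranspose_apply, applyRec1, of_apply, star_sum, star_mul', hM.apply,
    RCLike.star_def, RCLike.conj_conj]
  refine Finset.sum_congr rfl fun k _ => Finset.sum_comm.trans ?_
  exact Finset.sum_congr rfl fun b _ => Finset.sum_congr rfl fun b' _ => by ring

lemma applyRec12_ptrA1A2 [Fintype A1] [Fintype B1] [Fintype A2] [Fintype B2] {n1 n2 : ℕ}
    (F : Fin n1 → Matrix (A1 × B1) B1 ℂ) (G : Fin n2 → Matrix (A2 × B2) B2 ℂ)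
    (ρ : Matrix Q Q ℂ) :
    applyRec12 F G (ptrA1A2 ρ) = applyRec2 G (ptrA2 (applyRec1 F (ptrA1 ρ))) := by
  ext p q
  simp only [applyRec12, applyRec2, ptrA2, applyRec1, ptrA1, ptrA1A2, of_apply,
    Finset.mul_sum, Finset.sum_mul]
  simp only [← Fintype.sum_prod_type']
  refine Fintype.sum_equiv
    { toFun := fun ⟨k1, k2, b1, b1', b2, b2', a1, a2⟩ => (k2, b2, b2', a2, k1, b1, b1', a1)
      invFun := fun ⟨k2, b2, b2', a2, k1, b1, b1', a1⟩ => (k1, k2, b1, b1', b2, b2', a1, a2)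
      left_inv := fun _ => rfl
      right_inv := fun _ => rfl } _ _ fun _ => by simp only [Equiv.coe_fn_mk]; ring

/-- Kraus operators of `X ↦ (𝓡₂ ⊗ id)(tr_{A₂} X)`: the operator indexed by `(k, a)` projects the
`A₂` factor onto `⟨a|` and applies the Kraus operator `G k` of `𝓡₂` to `B₂`. -/
noncomputable def rec2Kraus [DecidableEq A1] [DecidableEq B1] [DecidableEq A2] [DecidableEq Ei]
    [DecidableEq Ri] {n2 : ℕ} (G : Fin n2 → Matrix (A2 × B2) B2 ℂ) (i : Fin n2 × A2) :
    Matrix Q Q ℂ :=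
  Matrix.of fun p r =>
    if r.1 = p.1 ∧ r.2.1 = p.2.1 ∧ r.2.2.1 = i.2 ∧ r.2.2.2.2 = p.2.2.2.2 then
      G i.1 (p.2.2.1, p.2.2.2.1) r.2.2.2.1
    else 0

section Kraus

-- the default is too small to find `DecidableEq Q` for `(1 : Matrix Q Q ℂ)`
set_option synthInstance.maxSize 400

variable [Fintype A1] [DecidableEq A1] [Fintype B1] [DecidableEq B1] [Fintype A2] [DecidableEq A2]
  [Fintype B2] [Fintype Ei] [DecidableEq Ei] [Fintype Ri] [DecidableEq Ri]
  {n2 : ℕ} (G : Fin n2 → Matrix (A2 × B2) B2 ℂ)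

lemma applyRec2_ptrA2_eq_sum (X : Matrix Q Q ℂ) :
    applyRec2 G (ptrA2 X) = ∑ i, rec2Kraus G i * X * (rec2Kraus G i)ᴴ := by
  ext ⟨p1, p2, p3, p4, p5, p6⟩ ⟨q1, q2, q3, q4, q5, q6⟩
  simp only [applyRec2, ptrA2, of_apply, Finset.mul_sum, Finset.sum_mul, rec2Kraus, ite_and,
    Matrix.sum_apply, mul_apply, ite_mul, zero_mul, Fintype.sum_prod_type, Finset.sum_ite_irrel,
    Finset.sum_ite_eq', Finset.mem_univ, ↓reduceIte, Finset.sum_const_zero, conjTranspose_apply,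
    RCLike.star_def, apply_ite (starRingEnd ℂ), map_zero, mul_ite, mul_zero]
  refine Finset.sum_congr rfl fun k _ => ?_
  rw [Finset.sum_comm]
  exact (Finset.sum_congr rfl fun _ _ => Finset.sum_comm).trans Finset.sum_comm

lemma applyRec2_ptrA2_sub (X Y : Matrix Q Q ℂ) :
    applyRec2 G (ptrA2 (X - Y)) = applyRec2 G (ptrA2 X) - applyRec2 G (ptrA2 Y) := by
  simp only [applyRec2_ptrA2_eq_sum, Matrix.mul_sub, Matrix.sub_mul, Finset.sum_sub_distrib]

lemma isHermitian_applyRec2_ptrA2 {X : Matrix Q Q ℂ} (hX : X.IsHermitian) :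
    (applyRec2 G (ptrA2 X)).IsHermitian := by
  rw [applyRec2_ptrA2_eq_sum]
  exact hX.sum_mul_mul_conjTranspose _

variable [DecidableEq B2]

lemma sum_rec2Kraus_conjTranspose_mul (hG : ∑ k, (G k)ᴴ * G k = 1) :
    ∑ i, (rec2Kraus G i)ᴴ * rec2Kraus G i = (1 : Matrix Q Q ℂ) := by
  ext ⟨r1, r2, r3, r4, r5⟩ ⟨s1, s2, s3, s4, s5⟩
  have hG' := congrFun (congrFun hG r4) s4
  simp only [Matrix.sum_apply, mul_apply, conjTranspose_apply, Fintype.sum_prod_type] at hG'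
  simp only [rec2Kraus, ite_and, Matrix.sum_apply, mul_apply, conjTranspose_apply, of_apply,
    RCLike.star_def, mul_ite, mul_zero, Fintype.sum_prod_type, Finset.sum_ite_irrel, Finset.sum_ite_eq,
    Finset.mem_univ, ↓reduceIte, Finset.sum_const_zero, one_apply, Prod.mk.injEq]
  split_ifs <;> simp_all [one_apply]

lemma traceNorm_applyRec2_ptrA2_le (hG : ∑ k, (G k)ᴴ * G k = 1) {X : Matrix Q Q ℂ}
    (hX : X.IsHermitian) : traceNorm (applyRec2 G (ptrA2 X)) ≤ traceNorm X := by
  rw [applyRec2_ptrA2_eq_sum]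
  exact traceNorm_sum_mul_mul_conjTranspose_le (sum_rec2Kraus_conjTranspose_mul G hG) hX

end Kraus

end Recovery

section UnionLemma

variable {A1 B1 A2 B2 Ei Ri : Type} [Fintype A1] [DecidableEq A1] [Fintype B1] [DecidableEq B1]
  [Fintype A2] [DecidableEq A2] [Fintype B2] [DecidableEq B2] [Fintype Ei] [DecidableEq Ei]
  [Fintype Ri] [DecidableEq Ri]

theorem union_lemma_general
    (S : Set (Matrix (A1 × (B1 × (A2 × (B2 × (Ei × Ri)))))
      (A1 × (B1 × (A2 × (B2 × (Ei × Ri))))) ℂ))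
    (hS : ∀ ρ ∈ S, ρ.PosSemidef ∧ ρ.trace = 1)
    (ε1 ε2 : ℝ)
    (n1 n2 : ℕ) (F : Fin n1 → Matrix (A1 × B1) B1 ℂ) (G : Fin n2 → Matrix (A2 × B2) B2 ℂ)
    (hG : ∑ k, (G k)ᴴ * G k = 1)
    (hrec1 : ∀ ρ ∈ S, traceNorm (applyRec1 F (ptrA1 ρ) - ρ) ≤ ε1)
    (hrec2 : ∀ ρ ∈ S, traceNorm (applyRec2 G (ptrA2 ρ) - ρ) ≤ ε2) :
    ∀ ρ ∈ S, traceNorm (applyRec12 F G (ptrA1A2 ρ) - ρ) ≤ ε1 + ε2 := by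
  intro ρ hρS
  have hρ : ρ.IsHermitian := (hS ρ hρS).1.1
  rw [applyRec12_ptrA1A2]
  set σ := applyRec1 F (ptrA1 ρ)
  have hσ : σ.IsHermitian := isHermitian_applyRec1 F (isHermitian_ptrA1 hρ)
  calc traceNorm (applyRec2 G (ptrA2 σ) - ρ)
      = traceNorm (applyRec2 G (ptrA2 (σ - ρ)) + (applyRec2 G (ptrA2 ρ) - ρ)) := by
        rw [applyRec2_ptrA2_sub, sub_add_sub_cancel]
    _ ≤ traceNorm (applyRec2 G (ptrA2 (σ - ρ))) + traceNorm (applyRec2 G (ptrA2 ρ) - ρ) :=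
        traceNorm_add_le (isHermitian_applyRec2_ptrA2 G (hσ.sub hρ))
          ((isHermitian_applyRec2_ptrA2 G hρ).sub hρ)
    _ ≤ ε1 + ε2 :=
        add_le_add ((traceNorm_applyRec2_ptrA2_le G hG (hσ.sub hρ)).trans (hrec1 ρ hρS))
          (hrec2 ρ hρS)

/-- union lemma. If the erasures of `A₁` and `A₂` are locally correctable
(with recovery channels supported on `A₁B₁` and `A₂B₂` respectively) up to errors `ε₁` and
`ε₂` uniformly on a set `S` of density matrices, then the joint erasure of `A₁A₂` is locally
correctable up to error `ε₁ + ε₂`. -/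
theorem union_lemma
    (S : Set (Matrix (A1 × (B1 × (A2 × (B2 × (Ei × Ri)))))
      (A1 × (B1 × (A2 × (B2 × (Ei × Ri))))) ℂ))
    (hS : ∀ ρ ∈ S, ρ.PosSemidef ∧ ρ.trace = 1)
    (ε1 ε2 : ℝ) (hε1 : 0 ≤ ε1) (hε2 : 0 ≤ ε2)
    (n1 n2 : ℕ) (F : Fin n1 → Matrix (A1 × B1) B1 ℂ) (G : Fin n2 → Matrix (A2 × B2) B2 ℂ)
    (hF : ∑ k, (F k)ᴴ * F k = 1) (hG : ∑ k, (G k)ᴴ * G k = 1)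
    (hrec1 : ∀ ρ ∈ S, traceNorm (applyRec1 F (ptrA1 ρ) - ρ) ≤ ε1)
    (hrec2 : ∀ ρ ∈ S, traceNorm (applyRec2 G (ptrA2 ρ) - ρ) ≤ ε2) :
    ∀ ρ ∈ S, traceNorm (applyRec12 F G (ptrA1A2 ρ) - ρ) ≤ ε1 + ε2 :=
  union_lemma_general S hS ε1 ε2 n1 n2 F G hG hrec1 hrec2

end UnionLemma
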